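/- Schlessinger's pullback freeness lemma: let R''' = R' ×_R R'' be the pullback (fiber product) of surjections of commutative Artinian local rings θ' : R' → R and θ'' : R'' → R with θ'' surjective. If M' is a free R'-module of finite rank n, M'' is a free R''-module of rank n, and there is an isomorphism R ⊗_{R'} M' ≅ R ⊗_{R''} M'' of R-modules, then the fiber product module M''' = M' ×_{(R⊗M')} M'' is a free R'''-module of rank n. -/

import Mathlib

/-!
STATEMENT 7: Schlessinger's pullback freeness lemma.
`R''' = R' ×_R R''` is the fiber product of local homomorphisms `θ' : R' → R`,
`θ'' : R'' → R` of commutative Artinian local rings with `θ''` surjective (here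
`θ' = algebraMap R' R`, `θ'' = algebraMap R'' R`).  If `M'` is free of rank `n` over
`R'`, `M''` is free of rank `n` over `R''`, and `τ : R ⊗_{R'} M' ≅ R ⊗_{R''} M''`
is an `R`-module isomorphism, then the fiber product module
`M''' = M' ×_{R ⊗ M'} M''` is a free `R'''`-module of rank `n`.
-/

open scoped TensorProduct
set_option synthInstance.maxHeartbeats 1000000

section

variable (R R' R'' : Type*) [CommRing R] [CommRing R'] [CommRing R'']
  [IsArtinianRing R] [IsLocalRing R] [IsArtinianRing R'] [IsLocalRing R']
  [IsArtinianRing R''] [IsLocalRing R'']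
  [Algebra R' R] [Algebra R'' R]
  (M' M'' : Type*) [AddCommGroup M'] [Module R' M'] [AddCommGroup M''] [Module R'' M'']

/-- The fiber product ring `R''' = R' ×_R R''`, as a subring of `R' × R''`. -/
def fiberRing : Subring (R' × R'') :=
  RingHom.eqLocus ((algebraMap R' R).comp (RingHom.fst R' R''))
    ((algebraMap R'' R).comp (RingHom.snd R' R''))

/-- `M'` as a module over `R' × R''` via the first projection. -/
noncomputable instance : Module (R' × R'') M' := Module.compHom M' (RingHom.fst R' R'')

/-- `M''` as a module over `R' × R''` via the second projection. -/
noncomputable instance : Module (R' × R'') M'' := Module.compHom M'' (RingHom.snd R' R'')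

/-- `M' × M''` as a module over the fiber product ring `R'''`. -/
noncomputable instance : Module (fiberRing R R' R'') (M' × M'') :=
  Module.compHom _ (fiberRing R R' R'').subtype

/-!
Lifting the transition matrix between the two base-changed bases along the surjection `θ''`
(its determinant lifts to a unit because `θ''` is a local homomorphism) replaces the basis of
`M''` by one that `τ` matches with the given basis of `M'`. In such compatible bases a pair lies
in `M'''` exactly when each pair of coordinates lies in `R'''`, so taking coordinates identifies
`M'''` with `R'''ⁿ`.
-/

theorem Module.Basis.exists_baseChange_eq_of_surjective {A B M ι : Type*} [CommRing A]
    [CommRing B] [Algebra A B] [IsLocalHom (algebraMap A B)] [AddCommGroup M] [Module A M]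
    [Fintype ι] (hf : Function.Surjective (algebraMap A B)) (b : Module.Basis ι A M)
    (e : Module.Basis ι B (B ⊗[A] M)) :
    ∃ c : Module.Basis ι A M, c.baseChange B = e := by
  classical
  set P := (b.baseChange B).toMatrix e
  obtain ⟨Q, hQ⟩ : ∃ Q : Matrix ι ι A, Q.map (algebraMap A B) = P :=
    ⟨fun i j => (hf (P i j)).choose, by ext i j; exact (hf (P i j)).choose_spec⟩
  have hQdet : IsUnit Q.det := by
    refine IsUnit.of_map (algebraMap A B) _ ?_
    rw [RingHom.map_det, RingHom.mapMatrix_apply, hQ]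
    let _ := (b.baseChange B).invertibleToMatrix e
    exact Matrix.isUnit_det_of_invertible P
  refine ⟨b.map (Q.toLinearEquiv b hQdet), Module.Basis.eq_of_apply_eq fun i => ?_⟩
  rw [Module.Basis.baseChange_apply, Module.Basis.map_apply]
  have hcol : Q.toLinearEquiv b hQdet (b i) = ∑ j, Q j i • b j := by
    simp [Matrix.toLinearEquiv, Matrix.toLin_self]
  calc (1 : B) ⊗ₜ[A] (Q.toLinearEquiv b hQdet (b i))
      = ∑ j, P j i • b.baseChange B j := by
        simp only [hcol, TensorProduct.tmul_sum, TensorProduct.tmul_smul, ← hQ, Matrix.map_apply,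
          algebraMap_smul, Module.Basis.baseChange_apply]
    _ = e i := (b.baseChange B).sum_toMatrix_smul_self e i

section FiberProduct

variable {S S' S'' N' N'' ι : Type*} [CommRing S] [CommRing S'] [CommRing S''] [Algebra S' S]
  [Algebra S'' S] [AddCommGroup N'] [Module S' N'] [AddCommGroup N''] [Module S'' N'']

def fiberSubmodule (τ : S ⊗[S'] N' →ₗ[S] S ⊗[S''] N'') :
    Submodule (fiberRing S S' S'') (N' × N'') where
  carrier := {p | τ (1 ⊗ₜ p.1) = 1 ⊗ₜ p.2}
  add_mem' {p q} hp hq := by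
    simp only [Set.mem_ofPred_eq] at hp hq ⊢
    simp only [Prod.fst_add, Prod.snd_add, TensorProduct.tmul_add, map_add, hp, hq]
  zero_mem' := by simp
  smul_mem' c p hp := by
    have hc : algebraMap S' S (c : S' × S'').1 = algebraMap S'' S (c : S' × S'').2 := c.2
    change τ (1 ⊗ₜ p.1) = 1 ⊗ₜ p.2 at hp
    change τ (1 ⊗ₜ ((c : S' × S'').1 • p.1)) = 1 ⊗ₜ ((c : S' × S'').2 • p.2)
    rw [TensorProduct.tmul_smul, TensorProduct.tmul_smul, ← algebraMap_smul S (c : S' × S'').1,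
      map_smul, hp, hc, algebraMap_smul]

theorem mem_fiberSubmodule_iff_repr {τ : S ⊗[S'] N' →ₗ[S] S ⊗[S''] N''}
    {b' : Module.Basis ι S' N'} {b'' : Module.Basis ι S'' N''}
    (hτ : ∀ i, τ (1 ⊗ₜ b' i) = 1 ⊗ₜ b'' i) (p : N' × N'') :
    p ∈ fiberSubmodule τ ↔
      ∀ i, algebraMap S' S (b'.repr p.1 i) = algebraMap S'' S (b''.repr p.2 i) := by
  have hrepr : (b''.baseChange S).repr.toLinearMap ∘ₗ τ = (b'.baseChange S).repr.toLinearMap :=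
    (b'.baseChange S).ext fun i => by
      simp only [LinearMap.comp_apply, LinearEquiv.coe_coe, Module.Basis.baseChange_apply, hτ]
      rw [← Module.Basis.baseChange_apply, ← Module.Basis.baseChange_apply,
        Module.Basis.repr_self, Module.Basis.repr_self]
  change τ _ = _ ↔ _
  rw [← (b''.baseChange S).repr.injective.eq_iff, ← LinearEquiv.coe_coe,
    ← LinearMap.comp_apply, hrepr, LinearEquiv.coe_coe, Finsupp.ext_iff]
  simp only [LinearEquiv.coe_coe, Module.Basis.baseChange_repr_tmul, Algebra.smul_def, mul_one]

noncomputable def fiberSubmodule.equivFun [Fintype ι] {τ : S ⊗[S'] N' →ₗ[S] S ⊗[S''] N''}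
    {b' : Module.Basis ι S' N'} {b'' : Module.Basis ι S'' N''}
    (hτ : ∀ i, τ (1 ⊗ₜ b' i) = 1 ⊗ₜ b'' i) :
    fiberSubmodule τ ≃ₗ[fiberRing S S' S''] (ι → fiberRing S S' S'') where
  toFun p i :=
    ⟨(b'.repr p.1.1 i, b''.repr p.1.2 i), (mem_fiberSubmodule_iff_repr hτ p.1).1 p.2 i⟩
  invFun f := ⟨(∑ i, (f i : S' × S'').1 • b' i, ∑ i, (f i : S' × S'').2 • b'' i),
    (mem_fiberSubmodule_iff_repr hτ _).2 fun i => by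
      rw [Module.Basis.repr_sum_self, Module.Basis.repr_sum_self]
      exact (f i).2⟩
  map_add' p q := by ext <;> simp
  map_smul' c p := by
    ext i
    · change b'.repr ((c : S' × S'').1 • p.1.1) i = _
      simp
    · change b''.repr ((c : S' × S'').2 • p.1.2) i = _
      simp
  left_inv p := by ext <;> simp
  right_inv f := by ext <;> simp [-map_sum, Module.Basis.repr_sum_self]

end FiberProduct

theorem schlessinger_pullback_freeness (n : ℕ)
    (hθ'' : Function.Surjective (algebraMap R'' R))
    (b' : Module.Basis (Fin n) R' M') (b'' : Module.Basis (Fin n) R'' M'')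
    (τ : (R ⊗[R'] M') ≃ₗ[R] (R ⊗[R''] M'')) :
    ∃ M''' : Submodule (fiberRing R R' R'') (M' × M''),
      (∀ p : M' × M'', p ∈ M''' ↔ τ ((1 : R) ⊗ₜ[R'] p.1) = (1 : R) ⊗ₜ[R''] p.2) ∧
      Nonempty (Module.Basis (Fin n) (fiberRing R R' R'') M''') := by
  have := IsLocalHom.of_surjective _ hθ''
  obtain ⟨c'', hc''⟩ := b''.exists_baseChange_eq_of_surjective hθ'' ((b'.baseChange R).map τ)
  have hτ : ∀ i, τ.toLinearMap (1 ⊗ₜ b' i) = 1 ⊗ₜ c'' i := fun i => by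
    simpa using congr($hc''.symm i)
  exact ⟨fiberSubmodule τ.toLinearMap, fun _ => Iff.rfl,
    ⟨.ofEquivFun (fiberSubmodule.equivFun hτ)⟩⟩

end
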